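/- arXiv:0902.4395 — 7 statements merged into one kernel-verified Lean document; each statement's English description precedes it below -/
import Mathlib

section
/- For all smooth 2π-periodic functions u, v, w : ℝ → ℝ, one has ∫₀^{2π} (2(u·v)″ − 2u′v′)·w dx = ∫₀^{2π} (2(u·w)″ − 2u′w′)·v dx. In other words, the Fréchet derivative (linearization in u) of ξ[u] := 2(u u_x)_x − u_x² is a symmetric (self-adjoint) operator with respect to the L² inner product on 2π-periodic functions, which is the Volterra criterion showing that the equation u_{xt} = 2(u u_x)_x − u_x² is Lagrangian. -/
/-!
Writing `L_u v = 2(uv)'' - 2u'v' = 2(u''v + u'v' + uv'')`, the antisymmetric part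
`(L_u v) w - (L_u w) v = 2u'(v'w - vw') + 2u(v''w - vw'')` is the exact derivative
`(2u·W(w, v))'` of `u` times a Wronskian. For periodic data this is the derivative of a
periodic function, so it integrates to zero over a period.
-/

open Real intervalIntegral

theorem Function.Periodic.deriv {𝕜 F : Type*} [NontriviallyNormedField 𝕜] [NormedAddCommGroup F]
    [NormedSpace 𝕜 F] {f : 𝕜 → F} {c : 𝕜} (hf : Function.Periodic f c) :
    Function.Periodic (deriv f) c := fun x => by
  rw [← deriv_comp_add_const, show (fun y => f (y + c)) = f from funext hf]

theorem Function.Periodic.integral_eq_zero_of_hasDerivAt {E : Type*} [NormedAddCommGroup E]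
    [NormedSpace ℝ E] [CompleteSpace E] {f f' : ℝ → E} {T : ℝ} (hf : Function.Periodic f T)
    (hderiv : ∀ x, HasDerivAt f (f' x) x) (hf' : Continuous f') (a : ℝ) :
    ∫ x in a..a + T, f' x = 0 := by
  rw [integral_eq_sub_of_hasDerivAt (fun x _ => hderiv x) (hf'.intervalIntegrable _ _), hf a,
    sub_self]

section

variable {𝕜 : Type*} [NontriviallyNormedField 𝕜]

noncomputable def wronskian (f g : 𝕜 → 𝕜) (x : 𝕜) : 𝕜 :=
  f x * deriv g x - deriv f x * g x

theorem Function.Periodic.wronskian {f g : 𝕜 → 𝕜} {c : 𝕜} (hf : Function.Periodic f c)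
    (hg : Function.Periodic g c) : Function.Periodic (wronskian f g) c := fun x => by
  simp only [_root_.wronskian, hf x, hg x, hf.deriv x, hg.deriv x]

theorem hasDerivAt_wronskian {f g : 𝕜 → 𝕜} (hf : ContDiff 𝕜 2 f) (hg : ContDiff 𝕜 2 g) (x : 𝕜) :
    HasDerivAt (wronskian f g) (f x * deriv (deriv g) x - deriv (deriv f) x * g x) x := by
  have hf' := (hf.differentiable two_ne_zero x).hasDerivAt
  have hg' := (hg.differentiable two_ne_zero x).hasDerivAt
  have hf'' := (hf.deriv'.differentiable one_ne_zero x).hasDerivAt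
  have hg'' := (hg.deriv'.differentiable one_ne_zero x).hasDerivAt
  refine ((hf'.mul hg'').sub (hf''.mul hg')).congr_deriv ?_
  ring

theorem deriv_deriv_mul {u v : 𝕜 → 𝕜} (hu : ContDiff 𝕜 2 u) (hv : ContDiff 𝕜 2 v) (x : 𝕜) :
    deriv (deriv fun y => u y * v y) x
      = deriv (deriv u) x * v x + 2 * (deriv u x * deriv v x) + u x * deriv (deriv v) x := by
  have hu' := (hu.differentiable two_ne_zero x).hasDerivAt
  have hv' := (hv.differentiable two_ne_zero x).hasDerivAt
  have hu'' := (hu.deriv'.differentiable one_ne_zero x).hasDerivAt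
  have hv'' := (hv.deriv'.differentiable one_ne_zero x).hasDerivAt
  have hprod : deriv (fun y => u y * v y) = fun y => deriv u y * v y + u y * deriv v y :=
    funext fun y => deriv_mul (hu.differentiable two_ne_zero y) (hv.differentiable two_ne_zero y)
  have hsum : HasDerivAt (fun y => deriv u y * v y + u y * deriv v y)
      (deriv (deriv u) x * v x + deriv u x * deriv v x
        + (deriv u x * deriv v x + u x * deriv (deriv v) x)) x :=
    (hu''.mul hv').add (hu'.mul hv'')
  rw [hprod, hsum.deriv]
  ring

/-- The Fréchet derivative of `ξ[u] = 2(u u')' - u'²` at `u` in the direction `v`. -/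
noncomputable def whithamLinearization (u v : 𝕜 → 𝕜) (x : 𝕜) : 𝕜 :=
  2 * deriv (deriv fun y => u y * v y) x - 2 * deriv u x * deriv v x

variable {u v w : 𝕜 → 𝕜}

theorem whithamLinearization_eq (hu : ContDiff 𝕜 2 u) (hv : ContDiff 𝕜 2 v) :
    whithamLinearization u v = fun x =>
      2 * (deriv (deriv u) x * v x + deriv u x * deriv v x + u x * deriv (deriv v) x) := by
  funext x
  rw [whithamLinearization, deriv_deriv_mul hu hv]
  ring

theorem continuous_whithamLinearization (hu : ContDiff 𝕜 2 u) (hv : ContDiff 𝕜 2 v) :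
    Continuous (whithamLinearization u v) := by
  rw [whithamLinearization_eq hu hv]
  have := hu.continuous; have := hv.continuous
  have := hu.continuous_deriv one_le_two; have := hv.continuous_deriv one_le_two
  have := hu.deriv'.continuous_deriv le_rfl; have := hv.deriv'.continuous_deriv le_rfl
  fun_prop

theorem hasDerivAt_mul_wronskian (hu : ContDiff 𝕜 2 u) (hv : ContDiff 𝕜 2 v)
    (hw : ContDiff 𝕜 2 w) (x : 𝕜) :
    HasDerivAt (fun y => 2 * (u y * wronskian w v y))
      (whithamLinearization u v x * w x - whithamLinearization u w x * v x) x := by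
  have hu' := (hu.differentiable two_ne_zero x).hasDerivAt
  refine ((hu'.mul (hasDerivAt_wronskian hw hv x)).const_mul (2 : 𝕜)).congr_deriv ?_
  rw [whithamLinearization_eq hu hv, whithamLinearization_eq hu hw, wronskian]
  ring

end

/-- For all smooth `2π`-periodic functions `u, v, w : ℝ → ℝ`,
`∫₀^{2π} (2(u·v)″ − 2u′v′)·w dx = ∫₀^{2π} (2(u·w)″ − 2u′w′)·v dx`; i.e. the
Fréchet derivative of `ξ[u] := 2(u u_x)_x − u_x²` is symmetric with respect to
the `L²` inner product on `2π`-periodic functions (Volterra criterion). -/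
theorem whitham_linearization_symmetric
    (u v w : ℝ → ℝ)
    (hu : ContDiff ℝ (⊤ : ℕ∞) u) (hv : ContDiff ℝ (⊤ : ℕ∞) v)
    (hw : ContDiff ℝ (⊤ : ℕ∞) w)
    (hup : Function.Periodic u (2 * π)) (hvp : Function.Periodic v (2 * π))
    (hwp : Function.Periodic w (2 * π)) :
    ∫ x in (0 : ℝ)..(2 * π),
        (2 * deriv (deriv (fun y => u y * v y)) x - 2 * deriv u x * deriv v x) * w x
      = ∫ x in (0 : ℝ)..(2 * π),
        (2 * deriv (deriv (fun y => u y * w y)) x - 2 * deriv u x * deriv w x) * v x := by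
  have h2 : (2 : WithTop ℕ∞) ≤ (⊤ : ℕ∞) := WithTop.coe_le_coe.mpr le_top
  replace hu := hu.of_le h2
  replace hv := hv.of_le h2
  replace hw := hw.of_le h2
  change ∫ x in (0 : ℝ)..(2 * π), whithamLinearization u v x * w x
    = ∫ x in (0 : ℝ)..(2 * π), whithamLinearization u w x * v x
  have hcont : ∀ {f g : ℝ → ℝ}, ContDiff ℝ 2 f → ContDiff ℝ 2 g →
      Continuous fun x => whithamLinearization u f x * g x :=
    fun hf hg => (continuous_whithamLinearization hu hf).mul hg.continuous
  rw [← sub_eq_zero, ← integral_sub ((hcont hv hw).intervalIntegrable _ _)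
    ((hcont hw hv).intervalIntegrable _ _)]
  simpa using ((hup.mul (hwp.wronskian hvp)).comp (2 * ·)).integral_eq_zero_of_hasDerivAt
    (hasDerivAt_mul_wronskian hu hv hw) ((hcont hv hw).sub (hcont hw hv)) 0
end

section
/- Let u, v : ℝ × ℝ → ℝ be smooth functions of (x,t) satisfying u_t = 2u u_x − v and v_x = u_x² (the regularized hydrodynamic form of the Whitham-type equation). Then the pointwise local conservation law ∂_t(u·u_x²) = ∂_x(2u²u_x² − v²/2) holds everywhere; i.e., the density u u_x² of the Hamiltonian functional H_θ = ∫ u u_x² dx satisfies a continuity equation. -/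
/-!
Differentiating `u_t = 2 u u_x - v` in `x` and using `v_x = u_x²` together with the symmetry of
mixed partials gives `u_xt = u_x² + 2 u u_xx`. With this, both sides of the conservation law
expand to `4 u u_x³ + 4 u² u_x u_xx - v u_x²`.
-/

open Function

noncomputable def partialFst (f : ℝ → ℝ → ℝ) (x t : ℝ) : ℝ :=
  deriv (fun x' => f x' t) x

noncomputable def partialSnd (f : ℝ → ℝ → ℝ) (x t : ℝ) : ℝ :=
  deriv (fun t' => f x t') t

theorem fderiv_fderiv_apply {𝕜 E F : Type*} [NontriviallyNormedField 𝕜]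
    [NormedAddCommGroup E] [NormedSpace 𝕜 E] [NormedAddCommGroup F] [NormedSpace 𝕜 F]
    {g : E → F} {p : E} (hg : DifferentiableAt 𝕜 (fderiv 𝕜 g) p) (v w : E) :
    fderiv 𝕜 (fun q => fderiv 𝕜 g q v) p w = fderiv 𝕜 (fderiv 𝕜 g) p w v := by
  rw [fderiv_clm_apply hg (differentiableAt_const v)]
  simp

section PartialDerivatives

variable {f : ℝ → ℝ → ℝ} {x t : ℝ}

theorem hasDerivAt_fst_fderiv (hf : DifferentiableAt ℝ (uncurry f) (x, t)) :
    HasDerivAt (fun x' => f x' t) (fderiv ℝ (uncurry f) (x, t) (1, 0)) x :=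
  hf.hasFDerivAt.comp_hasDerivAt (f := fun x' => (x', t)) x
    ((hasDerivAt_id x).prodMk (hasDerivAt_const x t))

theorem hasDerivAt_snd_fderiv (hf : DifferentiableAt ℝ (uncurry f) (x, t)) :
    HasDerivAt (fun t' => f x t') (fderiv ℝ (uncurry f) (x, t) (0, 1)) t :=
  hf.hasFDerivAt.comp_hasDerivAt (f := fun t' => (x, t')) t
    ((hasDerivAt_const t x).prodMk (hasDerivAt_id t))

theorem hasDerivAt_partialFst (hf : DifferentiableAt ℝ (uncurry f) (x, t)) :
    HasDerivAt (fun x' => f x' t) (partialFst f x t) x :=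
  (hasDerivAt_fst_fderiv hf).differentiableAt.hasDerivAt

theorem hasDerivAt_partialSnd (hf : DifferentiableAt ℝ (uncurry f) (x, t)) :
    HasDerivAt (fun t' => f x t') (partialSnd f x t) t :=
  (hasDerivAt_snd_fderiv hf).differentiableAt.hasDerivAt

theorem partialFst_eq_fderiv (hf : DifferentiableAt ℝ (uncurry f) (x, t)) :
    partialFst f x t = fderiv ℝ (uncurry f) (x, t) (1, 0) :=
  (hasDerivAt_fst_fderiv hf).deriv

theorem partialSnd_eq_fderiv (hf : DifferentiableAt ℝ (uncurry f) (x, t)) :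
    partialSnd f x t = fderiv ℝ (uncurry f) (x, t) (0, 1) :=
  (hasDerivAt_snd_fderiv hf).deriv

theorem uncurry_partialFst (hf : Differentiable ℝ (uncurry f)) :
    uncurry (partialFst f) = fun p => fderiv ℝ (uncurry f) p (1, 0) :=
  funext fun p => partialFst_eq_fderiv (hf p)

theorem uncurry_partialSnd (hf : Differentiable ℝ (uncurry f)) :
    uncurry (partialSnd f) = fun p => fderiv ℝ (uncurry f) p (0, 1) :=
  funext fun p => partialSnd_eq_fderiv (hf p)

variable {m n : WithTop ℕ∞}

theorem contDiff_uncurry_partialFst (hf : ContDiff ℝ n (uncurry f)) (hmn : m + 1 ≤ n) :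
    ContDiff ℝ m (uncurry (partialFst f)) := by
  rw [uncurry_partialFst (hf.differentiable (ne_of_gt (lt_of_lt_of_le (by simp) hmn)))]
  exact (hf.fderiv_right hmn).clm_apply contDiff_const

theorem contDiff_uncurry_partialSnd (hf : ContDiff ℝ n (uncurry f)) (hmn : m + 1 ≤ n) :
    ContDiff ℝ m (uncurry (partialSnd f)) := by
  rw [uncurry_partialSnd (hf.differentiable (ne_of_gt (lt_of_lt_of_le (by simp) hmn)))]
  exact (hf.fderiv_right hmn).clm_apply contDiff_const

theorem partialSnd_partialFst_comm (hf : ContDiff ℝ 2 (uncurry f)) (x t : ℝ) :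
    partialSnd (partialFst f) x t = partialFst (partialSnd f) x t := by
  have hf₁ : Differentiable ℝ (uncurry f) := hf.differentiable two_ne_zero
  have hd : Differentiable ℝ (fderiv ℝ (uncurry f)) :=
    (hf.fderiv_right (m := 1) (by norm_num)).differentiable one_ne_zero
  have hfx := (contDiff_uncurry_partialFst hf (m := 1) (by norm_num)).differentiable one_ne_zero
  have hft := (contDiff_uncurry_partialSnd hf (m := 1) (by norm_num)).differentiable one_ne_zero
  rw [partialSnd_eq_fderiv (hfx _), partialFst_eq_fderiv (hft _), uncurry_partialFst hf₁,
    uncurry_partialSnd hf₁, fderiv_fderiv_apply (hd _), fderiv_fderiv_apply (hd _)]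
  exact hf.contDiffAt.isSymmSndFDerivAt (by simp) _ _

end PartialDerivatives

theorem partialSnd_partialFst_of_whitham {u v : ℝ → ℝ → ℝ}
    (hu : ContDiff ℝ 2 (uncurry u)) (hv : Differentiable ℝ (uncurry v))
    (hut : ∀ x t, partialSnd u x t = 2 * u x t * partialFst u x t - v x t)
    (hvx : ∀ x t, partialFst v x t = partialFst u x t ^ 2) (x t : ℝ) :
    partialSnd (partialFst u) x t
      = partialFst u x t ^ 2 + 2 * u x t * partialFst (partialFst u) x t := by
  have hu₁ : Differentiable ℝ (uncurry u) := hu.differentiable two_ne_zero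
  have hux : Differentiable ℝ (uncurry (partialFst u)) :=
    (contDiff_uncurry_partialFst hu (m := 1) (by norm_num)).differentiable one_ne_zero
  rw [partialSnd_partialFst_comm hu, show partialSnd u = _ from funext₂ hut]
  refine ((((hasDerivAt_partialFst (hu₁ (x, t))).const_mul 2).mul
    (hasDerivAt_partialFst (hux (x, t)))).sub (hasDerivAt_partialFst (hv (x, t)))).deriv.trans ?_
  rw [hvx]
  ring

/-- If smooth `u(x,t)`, `v(x,t)` satisfy `u_t = 2u u_x − v` and
`v_x = u_x²` (the regularized hydrodynamic form of the Whitham-type equation),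
then the pointwise local conservation law
`∂_t(u·u_x²) = ∂_x(2u²u_x² − v²/2)` holds everywhere: the density `u u_x²` of
the Hamiltonian functional `H_θ = ∫ u u_x² dx` satisfies a continuity
equation. -/
theorem whitham_local_conservation_hamiltonian_density
    (u v : ℝ → ℝ → ℝ)
    (hu : ContDiff ℝ (⊤ : ℕ∞) (Function.uncurry u))
    (hv : ContDiff ℝ (⊤ : ℕ∞) (Function.uncurry v))
    (hut : ∀ x t,
      deriv (fun t' => u x t') t
        = 2 * u x t * deriv (fun x' => u x' t) x - v x t)
    (hvx : ∀ x t,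
      deriv (fun x' => v x' t) x = (deriv (fun x' => u x' t) x) ^ 2) :
    ∀ x t,
      deriv (fun t' => u x t' * (deriv (fun x' => u x' t') x) ^ 2) t
        = deriv (fun x' =>
            2 * (u x' t) ^ 2 * (deriv (fun y => u y t) x') ^ 2
              - (v x' t) ^ 2 / 2) x := by
  have hut : ∀ x t, partialSnd u x t = 2 * u x t * partialFst u x t - v x t := hut
  have hvx : ∀ x t, partialFst v x t = partialFst u x t ^ 2 := hvx
  have hu₂ : ContDiff ℝ 2 (uncurry u) := contDiff_infty.1 hu 2
  have hu₁ : Differentiable ℝ (uncurry u) := hu₂.differentiable two_ne_zero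
  have hv₁ : Differentiable ℝ (uncurry v) := hv.differentiable (by simp)
  have hux : Differentiable ℝ (uncurry (partialFst u)) :=
    (contDiff_uncurry_partialFst hu₂ (m := 1) (by norm_num)).differentiable one_ne_zero
  intro x t
  have hlhs :=
    (hasDerivAt_partialSnd (hu₁ (x, t))).mul ((hasDerivAt_partialSnd (hux (x, t))).pow 2)
  have hrhs := ((((hasDerivAt_partialFst (hu₁ (x, t))).pow 2).const_mul 2).mul
    ((hasDerivAt_partialFst (hux (x, t))).pow 2)).sub
    (((hasDerivAt_partialFst (hv₁ (x, t))).pow 2).div_const 2)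
  refine (hlhs.deriv.trans ?_).trans hrhs.deriv.symm
  rw [partialSnd_partialFst_of_whitham hu₂ hv₁ hut hvx, hut, hvx]
  simp only [Pi.pow_apply]
  push_cast
  ring
end

section
/- Let u, v : ℝ × ℝ → ℝ be smooth functions of (x,t) satisfying u_t = 2u u_x − v and v_x = u_x². Then ∂_x(v_t − 2u v_x) = 0 identically; that is, the quantity v_t − 2u v_x is independent of x (a function of t alone). In particular, up to an x-independent function of time, the pair (u,v) satisfies the regularized hydrodynamic system u_t = 2u u_x − v, v_t = 2u v_x, which is equivalent to the Whitham-type equation u_t = 2u u_x − ∂⁻¹u_x². -/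
/-!
Put `w = v_t − 2u v_x`. Since `v_x = u_x²`, `w_x = v_tx − 2u_x³ − 4u u_x u_xx`. Differentiating
`v_x = u_x²` in `t` and `u_t = 2u u_x − v` in `x`, and letting mixed partials commute (`u`, `v`
are `C²`), gives `v_tx = 2u_x u_xt = 2u_x (u_x² + 2u u_xx)`, so `w_x = 0`.
-/

open Function

section PartialDerivatives

variable {E : Type*} [NormedAddCommGroup E] [NormedSpace ℝ E]

theorem HasFDerivAt.hasDerivAt_fst {F : ℝ × ℝ → E} {L : ℝ × ℝ →L[ℝ] E} {x t : ℝ}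
    (h : HasFDerivAt F L (x, t)) : HasDerivAt (fun x' => F (x', t)) (L (1, 0)) x :=
  h.comp_hasDerivAt x ((hasDerivAt_id x).prodMk (hasDerivAt_const x t))

theorem HasFDerivAt.hasDerivAt_snd {F : ℝ × ℝ → E} {L : ℝ × ℝ →L[ℝ] E} {x t : ℝ}
    (h : HasFDerivAt F L (x, t)) : HasDerivAt (fun t' => F (x, t')) (L (0, 1)) t :=
  h.comp_hasDerivAt t ((hasDerivAt_const t x).prodMk (hasDerivAt_id t))

variable {f : ℝ → ℝ → ℝ} {m n : WithTop ℕ∞}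

theorem deriv_fst_eq_fderiv_uncurry {x t : ℝ} (h : DifferentiableAt ℝ (uncurry f) (x, t)) :
    deriv (fun x' => f x' t) x = fderiv ℝ (uncurry f) (x, t) (1, 0) :=
  h.hasFDerivAt.hasDerivAt_fst.deriv

theorem deriv_snd_eq_fderiv_uncurry {x t : ℝ} (h : DifferentiableAt ℝ (uncurry f) (x, t)) :
    deriv (fun t' => f x t') t = fderiv ℝ (uncurry f) (x, t) (0, 1) :=
  h.hasFDerivAt.hasDerivAt_snd.deriv

theorem ContDiff.differentiableAt_fst (hf : ContDiff ℝ n (uncurry f)) (hn : n ≠ 0) (x t : ℝ) :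
    DifferentiableAt ℝ (fun x' => f x' t) x :=
  (hf.differentiable hn (x, t)).hasFDerivAt.hasDerivAt_fst.differentiableAt

theorem ContDiff.differentiableAt_snd (hf : ContDiff ℝ n (uncurry f)) (hn : n ≠ 0) (x t : ℝ) :
    DifferentiableAt ℝ (fun t' => f x t') t :=
  (hf.differentiable hn (x, t)).hasFDerivAt.hasDerivAt_snd.differentiableAt

theorem ContDiff.uncurry_deriv_fst (hf : ContDiff ℝ n (uncurry f)) (hmn : m + 1 ≤ n) :
    ContDiff ℝ m (uncurry fun x t => deriv (fun x' => f x' t) x) := by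
  have hd : Differentiable ℝ (uncurry f) :=
    hf.differentiable (ne_bot_of_le_ne_bot (by simp) hmn)
  have hpartial : (uncurry fun x t => deriv (fun x' => f x' t) x)
      = fun p => fderiv ℝ (uncurry f) p (1, 0) :=
    funext fun p => deriv_fst_eq_fderiv_uncurry (hd p)
  rw [hpartial]
  exact (hf.fderiv_right hmn).clm_apply contDiff_const

theorem ContDiff.uncurry_deriv_snd (hf : ContDiff ℝ n (uncurry f)) (hmn : m + 1 ≤ n) :
    ContDiff ℝ m (uncurry fun x t => deriv (fun t' => f x t') t) := by
  have hd : Differentiable ℝ (uncurry f) :=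
    hf.differentiable (ne_bot_of_le_ne_bot (by simp) hmn)
  have hpartial : (uncurry fun x t => deriv (fun t' => f x t') t)
      = fun p => fderiv ℝ (uncurry f) p (0, 1) :=
    funext fun p => deriv_snd_eq_fderiv_uncurry (hd p)
  rw [hpartial]
  exact (hf.fderiv_right hmn).clm_apply contDiff_const

theorem deriv_fst_deriv_snd_comm (hf : ContDiff ℝ 2 (uncurry f)) (x t : ℝ) :
    deriv (fun x' => deriv (fun t' => f x' t') t) x
      = deriv (fun t' => deriv (fun x' => f x' t') x) t := by
  have hd : Differentiable ℝ (uncurry f) := hf.differentiable (by norm_num)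
  have hd2 : HasFDerivAt (fderiv ℝ (uncurry f)) (fderiv ℝ (fderiv ℝ (uncurry f)) (x, t)) (x, t) :=
    ((hf.fderiv_right (m := 1) (by norm_num)).differentiable (by norm_num) (x, t)).hasFDerivAt
  have hx : HasDerivAt (fun x' => deriv (fun t' => f x' t') t)
      (fderiv ℝ (fderiv ℝ (uncurry f)) (x, t) (1, 0) (0, 1)) x := by
    simp_rw [deriv_snd_eq_fderiv_uncurry (hd _)]
    simpa using hd2.hasDerivAt_fst.clm_apply (hasDerivAt_const x ((0 : ℝ), (1 : ℝ)))
  have ht : HasDerivAt (fun t' => deriv (fun x' => f x' t') x)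
      (fderiv ℝ (fderiv ℝ (uncurry f)) (x, t) (0, 1) (1, 0)) t := by
    simp_rw [deriv_fst_eq_fderiv_uncurry (hd _)]
    simpa using hd2.hasDerivAt_snd.clm_apply (hasDerivAt_const t ((1 : ℝ), (0 : ℝ)))
  rw [hx.deriv, ht.deriv]
  exact (hf.contDiffAt.isSymmSndFDerivAt (by simp)).eq _ _

end PartialDerivatives

noncomputable def transportResidual (u v : ℝ → ℝ → ℝ) (x t : ℝ) : ℝ :=
  deriv (fun t' => v x t') t - 2 * u x t * deriv (fun y => v y t) x

theorem hasDerivAt_transportResidual_fst {u v : ℝ → ℝ → ℝ}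
    (hu : ContDiff ℝ 2 (uncurry u)) (hv : ContDiff ℝ 2 (uncurry v))
    (hut : ∀ x t, deriv (fun t' => u x t') t
      = 2 * u x t * deriv (fun x' => u x' t) x - v x t)
    (hvx : ∀ x t, deriv (fun x' => v x' t) x = (deriv (fun x' => u x' t) x) ^ 2) (x t : ℝ) :
    HasDerivAt (fun x' => transportResidual u v x' t) 0 x := by
  have hu₁ : ContDiff ℝ 1 (uncurry fun x t => deriv (fun x' => u x' t) x) :=
    hu.uncurry_deriv_fst (by norm_num)
  have hv₁ : ContDiff ℝ 1 (uncurry fun x t => deriv (fun t' => v x t') t) :=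
    hv.uncurry_deriv_snd (by norm_num)
  have hu_x : HasDerivAt (fun x' => u x' t) (deriv (fun x' => u x' t) x) x :=
    (hu.differentiableAt_fst two_ne_zero x t).hasDerivAt
  have hux_x : HasDerivAt (fun x' => deriv (fun x'' => u x'' t) x')
      (deriv (fun x' => deriv (fun x'' => u x'' t) x') x) x :=
    (hu₁.differentiableAt_fst one_ne_zero x t).hasDerivAt
  have hux_t : HasDerivAt (fun t' => deriv (fun x' => u x' t') x)
      (deriv (fun t' => deriv (fun x' => u x' t') x) t) t :=
    (hu₁.differentiableAt_snd one_ne_zero x t).hasDerivAt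
  have hvt_x : HasDerivAt (fun x' => deriv (fun t' => v x' t') t)
      (deriv (fun x' => deriv (fun t' => v x' t') t) x) x :=
    (hv₁.differentiableAt_fst one_ne_zero x t).hasDerivAt
  have hv_x : HasDerivAt (fun x' => v x' t) (deriv (fun x' => u x' t) x ^ 2) x :=
    hvx x t ▸ (hv.differentiableAt_fst two_ne_zero x t).hasDerivAt
  have hu_tx : deriv (fun t' => deriv (fun x' => u x' t') x) t
      = deriv (fun x' => u x' t) x ^ 2
        + 2 * u x t * deriv (fun x' => deriv (fun x'' => u x'' t) x') x := by
    rw [← deriv_fst_deriv_snd_comm hu]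
    simp_rw [hut]
    exact ((((hu_x.const_mul 2).fun_mul hux_x).sub hv_x).congr_deriv (by ring)).deriv
  have hv_tx : deriv (fun x' => deriv (fun t' => v x' t') t) x
      = 2 * deriv (fun x' => u x' t) x * deriv (fun t' => deriv (fun x' => u x' t') x) t := by
    rw [deriv_fst_deriv_snd_comm hv]
    simp_rw [hvx]
    simpa using (hux_t.fun_pow 2).deriv
  have hresidual : (fun x' => transportResidual u v x' t)
      = fun x' => deriv (fun t' => v x' t') t - 2 * u x' t * deriv (fun y => u y t) x' ^ 2 := by
    simp only [transportResidual, hvx]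
  rw [hresidual]
  refine (hvt_x.sub ((hu_x.const_mul 2).fun_mul (hux_x.fun_pow 2))).congr_deriv ?_
  rw [hv_tx, hu_tx]
  ring

/-- If smooth `u(x,t)`, `v(x,t)` satisfy `u_t = 2u u_x − v` and
`v_x = u_x²`, then `∂_x(v_t − 2u v_x) = 0` identically, i.e. the quantity
`v_t − 2u v_x` is independent of `x` (a function of `t` alone). In particular,
up to an `x`-independent function of time, the pair `(u,v)` satisfies the
regularized hydrodynamic system `u_t = 2u u_x − v`, `v_t = 2u v_x`, equivalent
to the Whitham-type equation `u_t = 2u u_x − ∂⁻¹u_x²`. -/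
theorem whitham_regularization_second_equation
    (u v : ℝ → ℝ → ℝ)
    (hu : ContDiff ℝ (⊤ : ℕ∞) (Function.uncurry u))
    (hv : ContDiff ℝ (⊤ : ℕ∞) (Function.uncurry v))
    (hut : ∀ x t,
      deriv (fun t' => u x t') t
        = 2 * u x t * deriv (fun x' => u x' t) x - v x t)
    (hvx : ∀ x t,
      deriv (fun x' => v x' t) x = (deriv (fun x' => u x' t) x) ^ 2) :
    (∀ x t,
      deriv (fun x' =>
        deriv (fun t' => v x' t') t - 2 * u x' t * deriv (fun y => v y t) x') x
        = 0)
    ∧ ∀ x₁ x₂ t,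
        deriv (fun t' => v x₁ t') t - 2 * u x₁ t * deriv (fun y => v y t) x₁
          = deriv (fun t' => v x₂ t') t - 2 * u x₂ t * deriv (fun y => v y t) x₂ := by
  have hC2 : (2 : WithTop ℕ∞) ≤ ((⊤ : ℕ∞) : WithTop ℕ∞) := WithTop.coe_le_coe.mpr le_top
  have hresidual := hasDerivAt_transportResidual_fst (hu.of_le hC2) (hv.of_le hC2) hut hvx
  exact ⟨fun x t => (hresidual x t).deriv, fun x₁ x₂ t =>
    is_const_of_deriv_eq_zero (fun x => (hresidual x t).differentiableAt)
      (fun x => (hresidual x t).deriv) x₁ x₂⟩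
end

section
/- Let u : Ω → ℝ be a smooth function on an open subset Ω of the (x,τ)-plane with u_{xx} > 0 on Ω, satisfying the dispersive flow u_τ = u_{xxx}·(u_{xx})^{−3/2}. Set g := (u_{xx})^{−1/2}. Then the pointwise local conservation law ∂_τ(√(u_{xx})) = ∂_x(½ (g_x)² − g·g_{xx}) holds on Ω; i.e., the density √(u_{xx}) of the conserved functional γ₋₁ satisfies a continuity equation. -/
/-!
Write `b = u_xx` and `g = b^(-1/2)`. Since `b_x b^(-3/2) = -2 g_x`, the flow says `u_τ = -2 g_x`.
By symmetry of mixed partial derivatives `b_τ = ∂_x² u_τ = -2 g_xxx`, hence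
`∂_τ √b = b_τ / (2 √b) = -g g_xxx`. The flux has the same `x`-derivative, because in
`∂_x (½ g_x² - g g_xx)` the two terms `g_x g_xx` cancel.
-/

open Real Filter Topology
open scoped ContDiff

section DirDeriv

variable {E F : Type*} [NormedAddCommGroup E] [NormedSpace ℝ E]
  [NormedAddCommGroup F] [NormedSpace ℝ F]

noncomputable def dirDeriv (v : E) (f : E → F) (p : E) : F := fderiv ℝ f p v

theorem ContDiffOn.dirDeriv {n m : WithTop ℕ∞} {f : E → F} {s : Set E}
    (hf : ContDiffOn ℝ n f s) (hs : IsOpen s) (hmn : m + 1 ≤ n) (v : E) :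
    ContDiffOn ℝ m (dirDeriv v f) s :=
  (hf.fderiv_of_isOpen hs hmn).clm_apply contDiffOn_const

theorem Filter.EventuallyEq.dirDeriv_eq {f g : E → F} {p : E} (h : f =ᶠ[𝓝 p] g) (v : E) :
    dirDeriv v f p = dirDeriv v g p := by
  rw [dirDeriv, dirDeriv, h.fderiv_eq]

theorem ContDiffAt.dirDeriv_comm {n : WithTop ℕ∞} {f : E → F} {p : E}
    (hf : ContDiffAt ℝ n f p) (hn : 2 ≤ n) (v w : E) :
    dirDeriv w (dirDeriv v f) p = dirDeriv v (dirDeriv w f) p := by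
  have hd : DifferentiableAt ℝ (fderiv ℝ f) p :=
    (hf.fderiv_right (m := 1) (by norm_num [hn])).differentiableAt one_ne_zero
  change fderiv ℝ (fun q => fderiv ℝ f q v) p w = fderiv ℝ (fun q => fderiv ℝ f q w) p v
  simpa [fderiv_clm_apply hd (differentiableAt_const _)] using
    hf.isSymmSndFDerivAt (by simpa using hn) w v

end DirDeriv

section Slices

variable {F : Type*} [NormedAddCommGroup F] [NormedSpace ℝ F]

theorem DifferentiableAt.hasDerivAt_slice_fst {h : ℝ × ℝ → F} {x τ : ℝ}
    (hd : DifferentiableAt ℝ h (x, τ)) :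
    HasDerivAt (fun y => h (y, τ)) (dirDeriv (1, 0) h (x, τ)) x :=
  hd.hasFDerivAt.comp_hasDerivAt x ((hasDerivAt_id x).prodMk (hasDerivAt_const x τ))

theorem DifferentiableAt.hasDerivAt_slice_snd {h : ℝ × ℝ → F} {x τ : ℝ}
    (hd : DifferentiableAt ℝ h (x, τ)) :
    HasDerivAt (fun t => h (x, t)) (dirDeriv (0, 1) h (x, τ)) τ :=
  hd.hasFDerivAt.comp_hasDerivAt τ ((hasDerivAt_const τ x).prodMk (hasDerivAt_id τ))

theorem deriv_deriv_slice_fst {Ω : Set (ℝ × ℝ)} (hΩ : IsOpen Ω) {h : ℝ × ℝ → F}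
    (hh : ContDiffOn ℝ 2 h Ω) {x τ : ℝ} (hp : (x, τ) ∈ Ω) :
    deriv (deriv fun y => h (y, τ)) x = dirDeriv (1, 0) (dirDeriv (1, 0) h) (x, τ) := by
  have hslice : deriv (fun y => h (y, τ)) =ᶠ[𝓝 x] fun y => dirDeriv (1, 0) h (y, τ) := by
    filter_upwards [(hΩ.preimage (Continuous.prodMk_left τ)).mem_nhds hp] with y hy
    exact ((hh.differentiableOn (by simp)).differentiableAt
      (hΩ.mem_nhds hy)).hasDerivAt_slice_fst.deriv
  rw [hslice.deriv_eq]
  exact (((hh.dirDeriv hΩ (m := 1) le_rfl _).differentiableOn one_ne_zero).differentiableAt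
    (hΩ.mem_nhds hp)).hasDerivAt_slice_fst.deriv

theorem ContDiffOn.deriv_deriv_slice_fst {Ω : Set (ℝ × ℝ)} (hΩ : IsOpen Ω) {m n : WithTop ℕ∞}
    {f : ℝ → ℝ → F} (hf : ContDiffOn ℝ n (Function.uncurry f) Ω) (hmn : m + 2 ≤ n) (τ : ℝ) :
    ContDiffOn ℝ m (deriv (deriv fun y => f y τ)) ((fun y => (y, τ)) ⁻¹' Ω) := by
  have hs : IsOpen ((fun y => (y, τ)) ⁻¹' Ω) := hΩ.preimage (Continuous.prodMk_left τ)
  have hslice : ContDiffOn ℝ n (fun y => f y τ) ((fun y => (y, τ)) ⁻¹' Ω) :=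
    hf.comp (contDiff_id.prodMk contDiff_const).contDiffOn fun _ hy => hy
  exact (hslice.deriv_of_isOpen hs (by rwa [add_assoc, one_add_one_eq_two])).deriv_of_isOpen hs
    le_rfl

theorem hasDerivAt_deriv_deriv_comm {Ω : Set (ℝ × ℝ)} (hΩ : IsOpen Ω) {f : ℝ → ℝ → F}
    (hf : ContDiffOn ℝ 3 (Function.uncurry f) Ω) {x τ : ℝ} (hp : (x, τ) ∈ Ω) :
    HasDerivAt (fun t => deriv (deriv fun y => f y t) x)
      (deriv (deriv fun y => deriv (fun t => f y t) τ) x) τ := by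
  set U := Function.uncurry f
  have hU2 : ContDiffOn ℝ 2 U Ω := hf.of_le (by norm_num)
  have hD₁U : ContDiffOn ℝ 2 (dirDeriv (1, 0) U) Ω := hf.dirDeriv hΩ (by norm_num) _
  have hD₂U : ContDiffOn ℝ 2 (dirDeriv (0, 1) U) Ω := hf.dirDeriv hΩ (by norm_num) _
  have hD₁D₁U : DifferentiableAt ℝ (dirDeriv (1, 0) (dirDeriv (1, 0) U)) (x, τ) :=
    ((hD₁U.dirDeriv hΩ (m := 1) le_rfl _).differentiableOn one_ne_zero).differentiableAt
      (hΩ.mem_nhds hp)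
  have hslice : (fun t => deriv (deriv fun y => f y t) x) =ᶠ[𝓝 τ]
      fun t => dirDeriv (1, 0) (dirDeriv (1, 0) U) (x, t) := by
    filter_upwards [(hΩ.preimage (Continuous.prodMk_right x)).mem_nhds hp] with t ht
    exact deriv_deriv_slice_fst hΩ hU2 ht
  have hmixed : dirDeriv (0, 1) (dirDeriv (1, 0) U) =ᶠ[𝓝 (x, τ)]
      dirDeriv (1, 0) (dirDeriv (0, 1) U) := by
    filter_upwards [hΩ.mem_nhds hp] with q hq
    exact (hU2.contDiffAt (hΩ.mem_nhds hq)).dirDeriv_comm le_rfl _ _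
  have hut : (fun y => deriv (fun t => f y t) τ) =ᶠ[𝓝 x] fun y => dirDeriv (0, 1) U (y, τ) := by
    filter_upwards [(hΩ.preimage (Continuous.prodMk_left τ)).mem_nhds hp] with y hy
    exact ((hU2.differentiableOn (by simp)).differentiableAt
      (hΩ.mem_nhds hy)).hasDerivAt_slice_snd.deriv
  refine (hD₁D₁U.hasDerivAt_slice_snd.congr_of_eventuallyEq hslice).congr_deriv ?_
  calc dirDeriv (0, 1) (dirDeriv (1, 0) (dirDeriv (1, 0) U)) (x, τ)
      = dirDeriv (1, 0) (dirDeriv (0, 1) (dirDeriv (1, 0) U)) (x, τ) :=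
        (hD₁U.contDiffAt (hΩ.mem_nhds hp)).dirDeriv_comm le_rfl _ _
    _ = dirDeriv (1, 0) (dirDeriv (1, 0) (dirDeriv (0, 1) U)) (x, τ) := hmixed.dirDeriv_eq _
    _ = deriv (deriv fun y => dirDeriv (0, 1) U (y, τ)) x :=
        (deriv_deriv_slice_fst hΩ hD₂U hp).symm
    _ = deriv (deriv fun y => deriv (fun t => f y t) τ) x := hut.deriv.deriv_eq.symm

end Slices

theorem HasDerivAt.one_div_sqrt {b : ℝ → ℝ} {b' y : ℝ} (hb : HasDerivAt b b' y) (hy : 0 < b y) :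
    HasDerivAt (fun z => 1 / √(b z)) (-b' / (2 * b y ^ ((3 : ℝ) / 2))) y := by
  have hsqrt : √(b y) ≠ 0 := (sqrt_pos.2 hy).ne'
  have h32 : b y ^ ((3 : ℝ) / 2) = b y * √(b y) := by
    rw [show (3 : ℝ) / 2 = 1 + 1 / 2 by norm_num, rpow_add hy, rpow_one, sqrt_eq_rpow]
  simp only [one_div]
  refine ((hb.sqrt hy.ne').fun_inv hsqrt).congr_deriv ?_
  rw [h32, sq_sqrt hy.le]
  field_simp

theorem HasDerivAt.half_sq_sub_mul {g g₁ g₂ : ℝ → ℝ} {g₃ x : ℝ} (h₀ : HasDerivAt g (g₁ x) x)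
    (h₁ : HasDerivAt g₁ (g₂ x) x) (h₂ : HasDerivAt g₂ g₃ x) :
    HasDerivAt (fun y => 1 / 2 * g₁ y ^ 2 - g y * g₂ y) (-(g x * g₃)) x := by
  refine (((h₁.fun_pow 2).const_mul (1 / 2)).fun_sub (h₀.fun_mul h₂)).congr_deriv ?_
  push_cast
  ring

/-- Let `u` be smooth on an open subset `Ω` of the `(x,τ)`-plane
with `u_{xx} > 0` on `Ω`, satisfying the dispersive flow
`u_τ = u_{xxx}·(u_{xx})^{−3/2}`. With `g := (u_{xx})^{−1/2}`, the pointwise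
local conservation law `∂_τ(√(u_{xx})) = ∂_x(½ (g_x)² − g·g_{xx})` holds on
`Ω`: the density `√(u_{xx})` of the conserved functional `γ₋₁` satisfies a
continuity equation. -/
theorem dispersive_flow_local_conservation_sqrt_uxx
    (Ω : Set (ℝ × ℝ)) (hΩ : IsOpen Ω) (u : ℝ → ℝ → ℝ)
    (hu : ContDiffOn ℝ (⊤ : ℕ∞) (Function.uncurry u) Ω)
    (hpos : ∀ x τ, (x, τ) ∈ Ω → 0 < deriv (deriv (fun y => u y τ)) x)
    (hflow : ∀ x τ, (x, τ) ∈ Ω →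
      deriv (fun τ' => u x τ') τ
        = deriv (deriv (deriv (fun y => u y τ))) x
            / (deriv (deriv (fun y => u y τ)) x) ^ ((3 : ℝ) / 2)) :
    ∀ x τ, (x, τ) ∈ Ω →
      deriv (fun τ' => Real.sqrt (deriv (deriv (fun y => u y τ')) x)) τ
        = deriv (fun x' =>
            (1 / 2) *
              (deriv (fun y => 1 / Real.sqrt (deriv (deriv (fun z => u z τ)) y)) x') ^ 2
            - (1 / Real.sqrt (deriv (deriv (fun z => u z τ)) x')) *
                deriv (deriv
                  (fun y => 1 / Real.sqrt (deriv (deriv (fun z => u z τ)) y))) x') x := by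
  intro x τ hp
  set s := (fun y => (y, τ)) ⁻¹' Ω
  have hs : IsOpen s := hΩ.preimage (Continuous.prodMk_left τ)
  set b := deriv (deriv fun y => u y τ)
  set g := fun y => 1 / √(b y)
  have hb : ContDiffOn ℝ ∞ b s := hu.deriv_deriv_slice_fst hΩ (by norm_cast) τ
  have hg : ContDiffOn ℝ ∞ g s := contDiffOn_const.div (hb.sqrt fun y hy => (hpos y τ hy).ne')
    fun y hy => (sqrt_pos.2 (hpos y τ hy)).ne'
  have hg₁ : ContDiffOn ℝ ∞ (deriv g) s := hg.deriv_of_isOpen hs le_rfl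
  have hg₂ : ContDiffOn ℝ ∞ (deriv (deriv g)) s := hg₁.deriv_of_isOpen hs le_rfl
  have hasDerivAt_of_smooth : ∀ {φ : ℝ → ℝ}, ContDiffOn ℝ ∞ φ s → ∀ y ∈ s,
      HasDerivAt φ (deriv φ y) y := fun hφ y hy =>
    ((hφ.differentiableOn (by simp)).differentiableAt (hs.mem_nhds hy)).hasDerivAt
  have hut : (fun y => deriv (fun t => u y t) τ) =ᶠ[𝓝 x] fun y => -2 * deriv g y := by
    filter_upwards [hs.mem_nhds hp] with y hy
    rw [hflow y τ hy]
    change deriv b y / b y ^ _ = _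
    rw [((hasDerivAt_of_smooth hb y hy).one_div_sqrt (hpos y τ hy)).deriv]
    field_simp
  have hbt : HasDerivAt (fun t => deriv (deriv fun y => u y t) x)
      (-2 * deriv (deriv (deriv g)) x) τ := by
    refine (hasDerivAt_deriv_deriv_comm hΩ (hu.of_le (by norm_cast)) hp).congr_deriv ?_
    simp only [hut.deriv.deriv_eq, deriv_const_mul_field']
  have hflux := HasDerivAt.half_sq_sub_mul (hasDerivAt_of_smooth hg x hp)
    (hasDerivAt_of_smooth hg₁ x hp) (hasDerivAt_of_smooth hg₂ x hp)
  rw [(hbt.sqrt (hpos x τ hp).ne').deriv]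
  refine Eq.trans ?_ hflux.deriv.symm
  change -2 * _ / (2 * √(b x)) = -(1 / √(b x) * _)
  ring
end

section
/- Let u : Ω → ℝ be a smooth function on an open subset Ω of the (x,τ)-plane with u_{xx} > 0 on Ω, satisfying u_τ = u_{xxx}·(u_{xx})^{−3/2}. Then the function g := (u_{xx})^{−1/2} satisfies the Harry Dym-type equation g_τ = g³·g_{xxx} on Ω. -/
/-!
Write `a = u_xx` and `g = a^(-1/2)`. In every direction `v` the chain rule gives
`g_v = -½ g³ a_v`, so the flow `u_τ = a_x a^(-3/2)` reads `u_τ = -2 g_x`. Differentiating twice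
in `x` and exchanging the order of the mixed partial derivatives gives `a_τ = -2 g_xxx`, hence
`g_τ = -½ g³ a_τ = g³ g_xxx`.
-/

open Real Set
open scoped ContDiff

noncomputable def partialDeriv {E F : Type*} [NormedAddCommGroup E] [NormedSpace ℝ E]
    [NormedAddCommGroup F] [NormedSpace ℝ F] (v : E) (f : E → F) : E → F :=
  fun p => fderiv ℝ f p v

section PartialDeriv

variable {E F : Type*} [NormedAddCommGroup E] [NormedSpace ℝ E]
  [NormedAddCommGroup F] [NormedSpace ℝ F] {s : Set E} {f g : E → F} {p : E} (v w : E)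

theorem ContDiffOn.partialDeriv_of_isOpen (hs : IsOpen s) (hf : ContDiffOn ℝ ∞ f s) :
    ContDiffOn ℝ ∞ (partialDeriv v f) s :=
  (hf.fderiv_of_isOpen hs (by simp)).clm_apply contDiffOn_const

theorem ContDiffOn.iterate_partialDeriv_of_isOpen (hs : IsOpen s) (hf : ContDiffOn ℝ ∞ f s)
    (n : ℕ) :
    ContDiffOn ℝ ∞ ((partialDeriv v)^[n] f) s := by
  induction n with
  | zero => exact hf
  | succ n ih =>
    rw [Function.iterate_succ_apply']
    exact ih.partialDeriv_of_isOpen v hs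

theorem Set.EqOn.partialDeriv_of_isOpen (hfg : EqOn f g s) (hs : IsOpen s) :
    EqOn (partialDeriv v f) (partialDeriv v g) s := fun _ hq => by
  simp only [partialDeriv, (hfg.eventuallyEq_of_mem (hs.mem_nhds hq)).fderiv_eq]

theorem Set.EqOn.iterate_partialDeriv_of_isOpen (hfg : EqOn f g s) (hs : IsOpen s) (n : ℕ) :
    EqOn ((partialDeriv v)^[n] f) ((partialDeriv v)^[n] g) s := by
  induction n with
  | zero => exact hfg
  | succ n ih =>
    simp only [Function.iterate_succ_apply']
    exact ih.partialDeriv_of_isOpen v hs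

theorem iterate_partialDeriv_const_smul (c : ℝ) (n : ℕ) :
    (partialDeriv v)^[n] (c • f) = c • (partialDeriv v)^[n] f := by
  induction n with
  | zero => rfl
  | succ n ih =>
    simp only [Function.iterate_succ_apply', ih]
    ext p
    simp [partialDeriv, fderiv_const_smul_field]

theorem ContDiffAt.partialDeriv_comm (hf : ContDiffAt ℝ 2 f p) :
    partialDeriv w (partialDeriv v f) p = partialDeriv v (partialDeriv w f) p := by
  have hdiff : DifferentiableAt ℝ (fderiv ℝ f) p :=
    (hf.fderiv_right (m := 1) le_rfl).differentiableAt one_ne_zero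
  have hsnd (a b : E) : partialDeriv b (partialDeriv a f) p = fderiv ℝ (fderiv ℝ f) p b a := by
    show fderiv ℝ (fun q => fderiv ℝ f q a) p b = _
    simp [fderiv_clm_apply hdiff (differentiableAt_const a)]
  rw [hsnd, hsnd]
  exact (hf.isSymmSndFDerivAt (by simp)).eq w v

theorem ContDiffOn.partialDeriv_iterate_partialDeriv_comm (hs : IsOpen s)
    (hf : ContDiffOn ℝ ∞ f s) (n : ℕ) :
    EqOn (partialDeriv w ((partialDeriv v)^[n] f))
      ((partialDeriv v)^[n] (partialDeriv w f)) s := by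
  induction n with
  | zero => exact fun _ _ => rfl
  | succ n ih =>
    intro q hq
    have hn : ContDiffAt ℝ 2 ((partialDeriv v)^[n] f) q :=
      ((hf.iterate_partialDeriv_of_isOpen v hs n).contDiffAt (hs.mem_nhds hq)).of_le
        (WithTop.coe_le_coe.2 le_top)
    simp only [Function.iterate_succ_apply']
    rw [hn.partialDeriv_comm]
    exact ih.partialDeriv_of_isOpen v hs hq

end PartialDeriv

theorem hasDerivAt_one_div_sqrt {t : ℝ} (ht : 0 < t) :
    HasDerivAt (fun y => 1 / √y) (-(1 / 2) * (1 / √t) ^ 3) t := by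
  have hsqrt : 0 < √t := sqrt_pos.2 ht
  have h : HasDerivAt (fun y : ℝ => 1 / √y) ((0 * √t - 1 * (1 / (2 * √t))) / √t ^ 2) t :=
    (hasDerivAt_const t (1 : ℝ)).fun_div (hasDerivAt_sqrt ht.ne') hsqrt.ne'
  convert h using 1
  field_simp
  rw [sq_sqrt ht.le]
  ring

section OneDivSqrt

variable {E : Type*} [NormedAddCommGroup E] [NormedSpace ℝ E] {a : E → ℝ}

theorem ContDiffOn.one_div_sqrt {n : WithTop ℕ∞} {s : Set E} (ha : ContDiffOn ℝ n a s)
    (hpos : ∀ q ∈ s, 0 < a q) : ContDiffOn ℝ n (fun q => 1 / √(a q)) s :=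
  contDiffOn_const.div (ha.sqrt fun q hq => (hpos q hq).ne')
    fun q hq => (sqrt_pos.2 (hpos q hq)).ne'

theorem partialDeriv_one_div_sqrt {p : E} (v : E) (ha : DifferentiableAt ℝ a p)
    (hpos : 0 < a p) :
    partialDeriv v (fun q => 1 / √(a q)) p
      = -(1 / 2) * (1 / √(a p)) ^ 3 * partialDeriv v a p := by
  have h : HasFDerivAt (fun q => 1 / √(a q))
      ((-(1 / 2) * (1 / √(a p)) ^ 3) • fderiv ℝ a p) p :=
    (hasDerivAt_one_div_sqrt hpos).comp_hasFDerivAt p ha.hasFDerivAt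
  simp only [partialDeriv, h.fderiv, smul_apply, smul_eq_mul]

end OneDivSqrt

section Slices

variable {F : Type*} [NormedAddCommGroup F] [NormedSpace ℝ F] {f : ℝ × ℝ → F} {x τ : ℝ}

theorem deriv_slice_fst (hf : DifferentiableAt ℝ f (x, τ)) :
    deriv (fun y => f (y, τ)) x = partialDeriv (1, 0) f (x, τ) :=
  (hf.hasFDerivAt.comp_hasDerivAt x ((hasDerivAt_id x).prodMk (hasDerivAt_const x τ))).deriv

theorem deriv_slice_snd (hf : DifferentiableAt ℝ f (x, τ)) :
    deriv (fun s => f (x, s)) τ = partialDeriv (0, 1) f (x, τ) :=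
  (hf.hasFDerivAt.comp_hasDerivAt τ ((hasDerivAt_const τ x).prodMk (hasDerivAt_id τ))).deriv

variable {Ω : Set (ℝ × ℝ)} {k : ℝ → F}

theorem ContDiffOn.iterate_deriv_of_eqOn_slice_fst (hΩ : IsOpen Ω) (hf : ContDiffOn ℝ ∞ f Ω)
    (hk : EqOn k (fun y => f (y, τ)) {y | (y, τ) ∈ Ω}) (n : ℕ) :
    EqOn (deriv^[n] k) (fun y => (partialDeriv (1, 0))^[n] f (y, τ)) {y | (y, τ) ∈ Ω} := by
  have hslice : IsOpen {y | (y, τ) ∈ Ω} := hΩ.preimage (Continuous.prodMk_left τ)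
  induction n with
  | zero => exact hk
  | succ n ih =>
    intro y hy
    have hn := (hf.iterate_partialDeriv_of_isOpen (1, 0) hΩ n).contDiffAt (hΩ.mem_nhds hy)
    simp only [Function.iterate_succ_apply']
    rw [ih.deriv hslice hy]
    exact deriv_slice_fst (hn.differentiableAt (by simp))

theorem ContDiffOn.deriv_of_eqOn_slice_snd (hΩ : IsOpen Ω) (hf : ContDiffOn ℝ ∞ f Ω)
    (hk : EqOn k (fun s => f (x, s)) {s | (x, s) ∈ Ω}) (hp : (x, τ) ∈ Ω) :
    deriv k τ = partialDeriv (0, 1) f (x, τ) := by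
  rw [hk.deriv (hΩ.preimage (Continuous.prodMk_right x)) hp]
  exact deriv_slice_snd ((hf.contDiffAt (hΩ.mem_nhds hp)).differentiableAt (by simp))

end Slices

section HarryDym

local notation "∂ₓ" => partialDeriv ((1 : ℝ), (0 : ℝ))
local notation "∂τ" => partialDeriv ((0 : ℝ), (1 : ℝ))

variable {Ω : Set (ℝ × ℝ)} {U : ℝ × ℝ → ℝ}

theorem partialDeriv_snd_eqOn_of_flow (hΩ : IsOpen Ω) (hU : ContDiffOn ℝ ∞ U Ω)
    (hpos : ∀ q ∈ Ω, 0 < ∂ₓ^[2] U q)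
    (hflow : ∀ q ∈ Ω, ∂τ U q = ∂ₓ^[3] U q / (∂ₓ^[2] U q) ^ ((3 : ℝ) / 2)) :
    EqOn (∂τ U) ((-2 : ℝ) • ∂ₓ (fun q => 1 / √(∂ₓ^[2] U q))) Ω := by
  intro q hq
  have ha := (hU.iterate_partialDeriv_of_isOpen (1, 0) hΩ 2).contDiffAt (hΩ.mem_nhds hq)
  have hrpow : (∂ₓ^[2] U q) ^ ((3 : ℝ) / 2) = √(∂ₓ^[2] U q) ^ 3 := by
    rw [sqrt_eq_rpow, ← rpow_mul_natCast (hpos q hq).le]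
    norm_num
  rw [hflow q hq, Function.iterate_succ_apply' _ 2, Pi.smul_apply, smul_eq_mul,
    partialDeriv_one_div_sqrt _ (ha.differentiableAt (by simp)) (hpos q hq), hrpow]
  field_simp

theorem harryDym_of_flow (hΩ : IsOpen Ω) (hU : ContDiffOn ℝ ∞ U Ω)
    (hpos : ∀ q ∈ Ω, 0 < ∂ₓ^[2] U q)
    (hflow : ∀ q ∈ Ω, ∂τ U q = ∂ₓ^[3] U q / (∂ₓ^[2] U q) ^ ((3 : ℝ) / 2))
    {p : ℝ × ℝ} (hp : p ∈ Ω) :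
    ∂τ (fun q => 1 / √(∂ₓ^[2] U q)) p
      = (1 / √(∂ₓ^[2] U p)) ^ 3 * ∂ₓ^[3] (fun q => 1 / √(∂ₓ^[2] U q)) p := by
  have ha := (hU.iterate_partialDeriv_of_isOpen (1, 0) hΩ 2).contDiffAt (hΩ.mem_nhds hp)
  have ha_τ : ∂τ (∂ₓ^[2] U) p = -2 * ∂ₓ^[3] (fun q => 1 / √(∂ₓ^[2] U q)) p :=
    calc ∂τ (∂ₓ^[2] U) p
        = ∂ₓ^[2] (∂τ U) p := hU.partialDeriv_iterate_partialDeriv_comm _ _ hΩ 2 hp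
      _ = ∂ₓ^[2] ((-2 : ℝ) • ∂ₓ (fun q => 1 / √(∂ₓ^[2] U q))) p :=
          (partialDeriv_snd_eqOn_of_flow hΩ hU hpos hflow).iterate_partialDeriv_of_isOpen
            _ hΩ 2 hp
      _ = -2 * ∂ₓ^[3] (fun q => 1 / √(∂ₓ^[2] U q)) p := by
          rw [iterate_partialDeriv_const_smul, Pi.smul_apply, smul_eq_mul,
            ← Function.iterate_succ_apply]
  rw [partialDeriv_one_div_sqrt _ (ha.differentiableAt (by simp)) (hpos p hp), ha_τ]
  ring

end HarryDym

/-- Let `u` be smooth on an open subset `Ω` of the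
`(x,τ)`-plane with `u_{xx} > 0` on `Ω`, satisfying
`u_τ = u_{xxx}·(u_{xx})^{−3/2}`. Then the function `g := (u_{xx})^{−1/2}`
satisfies the Harry Dym-type equation `g_τ = g³·g_{xxx}` on `Ω`. -/
theorem dispersive_flow_harry_dym
    (Ω : Set (ℝ × ℝ)) (hΩ : IsOpen Ω) (u : ℝ → ℝ → ℝ)
    (hu : ContDiffOn ℝ (⊤ : ℕ∞) (Function.uncurry u) Ω)
    (hpos : ∀ x τ, (x, τ) ∈ Ω → 0 < deriv (deriv (fun y => u y τ)) x)
    (hflow : ∀ x τ, (x, τ) ∈ Ω →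
      deriv (fun τ' => u x τ') τ
        = deriv (deriv (deriv (fun y => u y τ))) x
            / (deriv (deriv (fun y => u y τ)) x) ^ ((3 : ℝ) / 2)) :
    ∀ x τ, (x, τ) ∈ Ω →
      deriv (fun τ' => 1 / Real.sqrt (deriv (deriv (fun y => u y τ')) x)) τ
        = (1 / Real.sqrt (deriv (deriv (fun y => u y τ)) x)) ^ 3 *
            deriv (deriv (deriv
              (fun y => 1 / Real.sqrt (deriv (deriv (fun z => u z τ)) y)))) x := by
  intro x τ hp
  set U := Function.uncurry u
  set g : ℝ × ℝ → ℝ := fun q => 1 / √((partialDeriv (1, 0))^[2] U q)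
  have hu_x (n : ℕ) {y s : ℝ} (hq : (y, s) ∈ Ω) :
      deriv^[n] (fun z => u z s) y = (partialDeriv (1, 0))^[n] U (y, s) :=
    hu.iterate_deriv_of_eqOn_slice_fst hΩ (fun _ _ => rfl) n hq
  have hg_slice {y s : ℝ} (hq : (y, s) ∈ Ω) :
      1 / √(deriv^[2] (fun z => u z s) y) = g (y, s) :=
    congrArg (fun t => 1 / √t) (hu_x 2 hq)
  have ha_pos : ∀ q ∈ Ω, 0 < (partialDeriv (1, 0))^[2] U q := fun q hq =>
    hu_x 2 hq ▸ hpos q.1 q.2 hq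
  have hg : ContDiffOn ℝ ∞ g Ω :=
    (hu.iterate_partialDeriv_of_isOpen _ hΩ 2).one_div_sqrt ha_pos
  have hflow_U : ∀ q ∈ Ω, partialDeriv (0, 1) U q
      = (partialDeriv (1, 0))^[3] U q / ((partialDeriv (1, 0))^[2] U q) ^ ((3 : ℝ) / 2) := by
    rintro ⟨y, s⟩ hq
    rw [← hu.deriv_of_eqOn_slice_snd hΩ (fun _ _ => rfl) hq, ← hu_x 3 hq, ← hu_x 2 hq]
    exact hflow y s hq
  calc _ = partialDeriv (0, 1) g (x, τ) :=
        hg.deriv_of_eqOn_slice_snd hΩ (fun _ hs => hg_slice hs) hp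
    _ = g (x, τ) ^ 3 * (partialDeriv (1, 0))^[3] g (x, τ) :=
        harryDym_of_flow hΩ hu ha_pos hflow_U hp
    _ = _ := congrArg₂ (fun c d => c ^ 3 * d) (hg_slice hp).symm
      (hg.iterate_deriv_of_eqOn_slice_fst hΩ (fun _ hy => hg_slice hy) 3 hp).symm
end

section
/- Let c, a, k be real constants. On the open set of points (x,t) ∈ ℝ² where a(x − 2ct) + k > 0, the function u(x,t) := −c + (a(x − 2ct) + k)^{2/3} satisfies the Whitham-type equation in local form u_{xt} = 2(u u_x)_x − u_x². This is the exact one-parametric solution q(x,t) = −c_η + [ (3/2)√(h̄)(x − 2c_η t) + k̄ ]^{2/3} obtained from the two-dimensional invariant reduction. -/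
/-!
Writing `u x t = f (x - v t)` turns the Whitham equation into the profile ODE
`(2 f + v) f'' + f'² = 0`. For `v = 2c` and `f = -c + g` this reads `2 g g'' + g'² = 0`, and for
`g ξ = (a ξ + k) ^ p` the left side is `p (3p - 2) a² (a ξ + k) ^ (2p - 2)`, which vanishes at
`p = 2/3`.
-/

open Real Filter Topology

theorem whitham_of_travellingWave {f : ℝ → ℝ} {v x t f₁ f₂ : ℝ}
    (hf : HasDerivAt f f₁ (x - v * t)) (hf' : HasDerivAt (deriv f) f₂ (x - v * t))
    (hode : (2 * f (x - v * t) + v) * f₂ + f₁ ^ 2 = 0) :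
    deriv (fun t' => deriv (fun x' => f (x' - v * t')) x) t
      = deriv (fun x' => 2 * (f (x' - v * t) * deriv (fun y => f (y - v * t)) x')) x
        - (deriv (fun x' => f (x' - v * t)) x) ^ 2 := by
  simp only [deriv_comp_sub_const]
  have hshift : HasDerivAt (fun t' => x - v * t') (-v) t := by
    simpa using ((hasDerivAt_id t).const_mul v).const_sub x
  have hlhs : HasDerivAt (fun t' => deriv f (x - v * t')) (f₂ * -v) t :=
    (hf'.comp t hshift :)
  have hflux : HasDerivAt (fun x' => 2 * (f (x' - v * t) * deriv f (x' - v * t)))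
      (2 * (f₁ * deriv f (x - v * t) + f (x - v * t) * f₂)) x :=
    ((hf.comp_sub_const x (v * t)).mul (hf'.comp_sub_const x (v * t))).const_mul 2
  rw [hlhs.deriv, hflux.deriv, hf.deriv]
  linear_combination -hode

section AffinePower

variable {a k p ξ : ℝ}

theorem hasDerivAt_affine_rpow (h : 0 < a * ξ + k) :
    HasDerivAt (fun ξ => (a * ξ + k) ^ p) (p * a * (a * ξ + k) ^ (p - 1)) ξ := by
  have haff : HasDerivAt (fun ξ => a * ξ + k) a ξ := by
    simpa using ((hasDerivAt_id ξ).const_mul a).add_const k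
  convert haff.rpow_const (p := p) (Or.inl h.ne') using 1
  ring

theorem hasDerivAt_deriv_affine_rpow (h : 0 < a * ξ + k) :
    HasDerivAt (deriv fun ξ => (a * ξ + k) ^ p)
      (p * a * ((p - 1) * a * (a * ξ + k) ^ (p - 2))) ξ := by
  have hpos : ∀ᶠ η in 𝓝 ξ, 0 < a * η + k :=
    (continuous_const.mul continuous_id |>.add continuous_const).continuousAt.eventually
      (eventually_gt_nhds h)
  have hderiv :
      deriv (fun ξ => (a * ξ + k) ^ p) =ᶠ[𝓝 ξ] fun η => p * a * (a * η + k) ^ (p - 1) :=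
    hpos.mono fun η hη => (hasDerivAt_affine_rpow hη).deriv
  have := (hasDerivAt_affine_rpow (p := p - 1) h).const_mul (p * a)
  rw [show p - 1 - 1 = p - 2 by ring] at this
  exact this.congr_of_eventuallyEq hderiv

theorem affine_rpow_two_thirds_ode (h : 0 < a * ξ + k) :
    2 * (a * ξ + k) ^ ((2 : ℝ) / 3)
        * (2 / 3 * a * ((2 / 3 - 1) * a * (a * ξ + k) ^ ((2 : ℝ) / 3 - 2)))
      + (2 / 3 * a * (a * ξ + k) ^ ((2 : ℝ) / 3 - 1)) ^ 2 = 0 := by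
  have e₁ : (a * ξ + k) ^ ((2 : ℝ) / 3) * (a * ξ + k) ^ ((2 : ℝ) / 3 - 2)
      = (a * ξ + k) ^ (-(2 : ℝ) / 3) := by
    rw [← rpow_add h]; norm_num
  have e₂ : (a * ξ + k) ^ ((2 : ℝ) / 3 - 1) * (a * ξ + k) ^ ((2 : ℝ) / 3 - 1)
      = (a * ξ + k) ^ (-(2 : ℝ) / 3) := by
    rw [← rpow_add h]; norm_num
  linear_combination (-(4 : ℝ) / 9 * a ^ 2) * e₁ + (4 / 9 * a ^ 2) * e₂

end AffinePower

/-- For real constants `c, a, k`, on the open set of points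
`(x,t)` where `a(x − 2ct) + k > 0`, the function
`u(x,t) := −c + (a(x − 2ct) + k)^{2/3}` satisfies the Whitham-type equation in
local form `u_{xt} = 2(u u_x)_x − u_x²`. This is the exact one-parametric
solution obtained from the two-dimensional invariant reduction. -/
theorem whitham_exact_travelling_solution
    (c a k : ℝ) (u : ℝ → ℝ → ℝ)
    (hudef : ∀ x t, u x t = -c + (a * (x - 2 * c * t) + k) ^ ((2 : ℝ) / 3)) :
    ∀ x t, 0 < a * (x - 2 * c * t) + k →
      deriv (fun t' => deriv (fun x' => u x' t') x) t
        = deriv (fun x' => 2 * (u x' t * deriv (fun y => u y t) x')) x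
          - (deriv (fun x' => u x' t) x) ^ 2 := by
  intro x t h
  simp only [hudef]
  have hf := (hasDerivAt_affine_rpow (p := 2 / 3) h).const_add (-c)
  have hf' := hasDerivAt_deriv_affine_rpow (p := 2 / 3) h
  rw [← deriv_const_add' (-c)] at hf'
  refine whitham_of_travellingWave hf hf' ?_
  linear_combination affine_rpow_two_thirds_ode h
end

section
/- Let c_θ, c_η ∈ ℝ and let u : I → ℝ be a four times continuously differentiable function on an interval I with u″(x) > 0 for all x ∈ I, satisfying the stationary equation of the four-dimensional invariant reduction: (½ (u″)^{−1/2})″ + c_θ((u′)² − 2(u·u′)′) − 2c_η·u″ = 0. Then the energy-type quantity E(x) := c_θ·u·(u′)² + c_η·(u′)² − u′·(½ (u″)^{−1/2})′ − ½√(u″) is constant on I; i.e., E is a first integral of the x-flow on the four-dimensional invariant submanifold M⁴. -/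
open Real

/-!
Differentiating the energy gives `E′ = −u′ · grad L₄[u]`, so `E` is constant wherever the
stationary equation holds. The terms of `E′` coming from `c_θ u u′² + c_η u′² − u′ g′`
(with `g = ½ (u″)^{−1/2}`) reproduce `−u′ · grad L₄[u]` except for `−u″ g′`, and this is
cancelled by the derivative of `−½ √u″` because `u″ · (½ (u″)^{−1/2})′ = −(½ √u″)′`.
-/

theorem HasDerivAt.half_one_div_sqrt {w : ℝ → ℝ} {w' x : ℝ} (hw : HasDerivAt w w' x)
    (hpos : 0 < w x) :
    HasDerivAt (fun y => 1 / 2 * (1 / √(w y))) (-(w' / (4 * √(w x))) / w x) x := by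
  refine (((hasDerivAt_const x (1 : ℝ)).div (hw.sqrt hpos.ne')
    (sqrt_pos.mpr hpos).ne').const_mul (1 / 2)).congr_deriv ?_
  rw [sq_sqrt hpos.le]
  field_simp
  ring

theorem HasDerivAt.half_sqrt {w : ℝ → ℝ} {w' x : ℝ} (hw : HasDerivAt w w' x)
    (hpos : 0 < w x) :
    HasDerivAt (fun y => 1 / 2 * √(w y)) (w' / (4 * √(w x))) x := by
  refine ((hw.sqrt hpos.ne').const_mul (1 / 2)).congr_deriv ?_
  field_simp
  ring

/-- The left-hand side `grad L₄[u]` of the stationary equation. -/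
noncomputable def gradL4 (cθ cη : ℝ) (u : ℝ → ℝ) (x : ℝ) : ℝ :=
  deriv (deriv (fun y => (1 / 2) * (1 / √(deriv (deriv u) y)))) x
    + cθ * ((deriv u x) ^ 2 - 2 * deriv (fun y => u y * deriv u y) x)
    - 2 * cη * deriv (deriv u) x

noncomputable def energy (cθ cη : ℝ) (u : ℝ → ℝ) (x : ℝ) : ℝ :=
  cθ * u x * (deriv u x) ^ 2 + cη * (deriv u x) ^ 2
    - deriv u x * deriv (fun z => (1 / 2) * (1 / √(deriv (deriv u) z))) x
    - (1 / 2) * √(deriv (deriv u) x)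

theorem hasDerivAt_energy (cθ cη : ℝ) {u : ℝ → ℝ} {x : ℝ} (hu : ContDiffAt ℝ 4 u x)
    (hpos : 0 < deriv (deriv u) x) :
    HasDerivAt (energy cθ cη u) (-(deriv u x * gradL4 cθ cη u x)) x := by
  set w := deriv (deriv u)
  set g := fun y => (1 / 2) * (1 / √(w y))
  have hu₁ : ContDiffAt ℝ 3 (deriv u) x := hu.derivWithin (by norm_num)
  have hw : ContDiffAt ℝ 2 w x := hu₁.derivWithin (by norm_num)
  have hg : ContDiffAt ℝ 2 g x :=
    contDiffAt_const.mul (contDiffAt_const.div (hw.sqrt hpos.ne') (sqrt_pos.mpr hpos).ne')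
  have hg' : ContDiffAt ℝ 1 (deriv g) x := hg.derivWithin (by norm_num)
  have du : HasDerivAt u (deriv u x) x :=
    (hu.differentiableAt (by norm_num)).hasDerivAt
  have dv : HasDerivAt (deriv u) (w x) x :=
    (hu₁.differentiableAt (by norm_num)).hasDerivAt
  have dw : HasDerivAt w (deriv w x) x :=
    (hw.differentiableAt (by norm_num)).hasDerivAt
  have dg : HasDerivAt g (-(deriv w x / (4 * √(w x))) / w x) x := dw.half_one_div_sqrt hpos
  have dg' : HasDerivAt (deriv g) (deriv (deriv g) x) x :=
    (hg'.differentiableAt one_ne_zero).hasDerivAt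
  have d_uv : deriv (fun y => u y * deriv u y) x = deriv u x * deriv u x + u x * w x :=
    (du.mul dv).deriv
  have dE := ((((du.const_mul cθ).mul (dv.pow 2)).add (dv.pow 2 |>.const_mul cη)).sub
    (dv.mul dg')).sub (dw.half_sqrt hpos)
  refine HasDerivAt.congr_deriv (f := energy cθ cη u) dE ?_
  have w_mul_dg : w x * (-(deriv w x / (4 * √(w x))) / w x) = -(deriv w x / (4 * √(w x))) :=
    mul_div_cancel₀ _ hpos.ne'
  rw [gradL4, d_uv, dg.deriv]
  simp only [Pi.pow_apply]
  linear_combination -w_mul_dg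

/-- Let `c_θ, c_η ∈ ℝ` and let `u` be four times continuously
differentiable on an interval `(a,b)` with `u″ > 0`, satisfying the stationary
equation of the four-dimensional invariant reduction
`(½(u″)^{−1/2})″ + c_θ((u′)² − 2(u u′)′) − 2c_η u″ = 0`. Then the energy-type
quantity `E = c_θ u (u′)² + c_η (u′)² − u′·(½(u″)^{−1/2})′ − ½√(u″)` is
constant on the interval: it is a first integral of the `x`-flow on the
four-dimensional invariant submanifold `M⁴`. -/
theorem four_dimensional_reduction_energy_integral
    (cθ cη a b : ℝ) (u : ℝ → ℝ)
    (hu : ContDiffOn ℝ 4 u (Set.Ioo a b))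
    (hpos : ∀ x ∈ Set.Ioo a b, 0 < deriv (deriv u) x)
    (heq : ∀ x ∈ Set.Ioo a b,
      deriv (deriv (fun y => (1 / 2) * (1 / Real.sqrt (deriv (deriv u) y)))) x
        + cθ * ((deriv u x) ^ 2 - 2 * deriv (fun y => u y * deriv u y) x)
        - 2 * cη * deriv (deriv u) x = 0) :
    ∀ x ∈ Set.Ioo a b, ∀ y ∈ Set.Ioo a b,
      cθ * u x * (deriv u x) ^ 2 + cη * (deriv u x) ^ 2
        - deriv u x * deriv (fun z => (1 / 2) * (1 / Real.sqrt (deriv (deriv u) z))) x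
        - (1 / 2) * Real.sqrt (deriv (deriv u) x)
      = cθ * u y * (deriv u y) ^ 2 + cη * (deriv u y) ^ 2
        - deriv u y * deriv (fun z => (1 / 2) * (1 / Real.sqrt (deriv (deriv u) z))) y
        - (1 / 2) * Real.sqrt (deriv (deriv u) y) := by
  have hE : ∀ z ∈ Set.Ioo a b, HasDerivAt (energy cθ cη u) 0 z := fun z hz =>
    (hasDerivAt_energy cθ cη (hu.contDiffAt (isOpen_Ioo.mem_nhds hz)) (hpos z hz)).congr_deriv
      (by rw [show gradL4 cθ cη u z = 0 from heq z hz, mul_zero, neg_zero])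
  exact fun x hx y hy => isOpen_Ioo.is_const_of_deriv_eq_zero isPreconnected_Ioo
    (fun z hz => (hE z hz).differentiableAt.differentiableWithinAt)
    (fun z hz => (hE z hz).deriv) hx hy
end
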